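/- arXiv:2404.16554 — 2 statements merged into one kernel-verified Lean document; each statement's English description precedes it below -/
import Mathlib

section
/- Let w : [0,T] → V be continuously differentiable and set e(t) = w(t) − u_ms(t). Then for every t ∈ [0,T] the Céa-type differential inequality holds: d/dt ‖e(t)‖_C² + ‖e(t)‖_L² ≤ ‖w'(t) − u'(t)‖_C² + ‖e(t)‖_C² + ‖w(t) − u(t)‖_L². -/
/-!
With `e = w − u_ms`, the symmetry of `C` gives `d/dt ‖e‖_C² = 2 eᵀC(w' − u_ms')`. Split
`w' − u_ms' = (w' − u') + (u' − u_ms')`. Since `e(t) ∈ V`, Galerkin orthogonality turns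
`eᵀC(u' − u_ms')` into `−eᵀL(u − u_ms) = −‖e‖_L² + eᵀL(w − u)`, and Young's inequality
`2 xᵀSy ≤ ‖x‖_S² + ‖y‖_S²` for `S = C, L` absorbs the two remaining cross terms.
-/

open Matrix

section QuadraticForm

variable {n R : Type*} [Fintype n]

theorem Matrix.IsSymm.dotProduct_mulVec_comm [CommSemiring R] {A : Matrix n n R} (hA : A.IsSymm)
    (x y : n → R) : x ⬝ᵥ (A *ᵥ y) = y ⬝ᵥ (A *ᵥ x) := by
  rw [dotProduct_mulVec, ← mulVec_transpose, hA.eq, dotProduct_comm]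

theorem Matrix.PosSemidef.two_mul_dotProduct_mulVec_le [CommRing R] [LinearOrder R]
    [IsStrictOrderedRing R] [StarRing R] [TrivialStar R] {A : Matrix n n R} (hA : A.PosSemidef)
    (x y : n → R) : 2 * (x ⬝ᵥ (A *ᵥ y)) ≤ x ⬝ᵥ (A *ᵥ x) + y ⬝ᵥ (A *ᵥ y) := by
  have hsymm := (isHermitian_iff_isSymm.mp hA.isHermitian).dotProduct_mulVec_comm y x
  have hdiff := hA.dotProduct_mulVec_nonneg (x - y)
  simp only [star_trivial, mulVec_sub, dotProduct_sub, sub_dotProduct] at hdiff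
  linarith

end QuadraticForm

section Deriv

variable {𝕜 ι : Type*} [NontriviallyNormedField 𝕜] [Fintype ι] {f g : 𝕜 → ι → 𝕜}
  {f' g' : ι → 𝕜} {s : Set 𝕜} {x : 𝕜}

theorem HasDerivWithinAt.dotProduct (hf : HasDerivWithinAt f f' s x)
    (hg : HasDerivWithinAt g g' s x) :
    HasDerivWithinAt (fun y => f y ⬝ᵥ g y) (f' ⬝ᵥ g x + f x ⬝ᵥ g') s x := by
  show HasDerivWithinAt (fun y => ∑ i, f y i * g y i)
    (∑ i, f' i * g x i + ∑ i, f x i * g' i) s x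
  rw [← Finset.sum_add_distrib]
  exact HasDerivWithinAt.fun_sum fun i _ =>
    (hasDerivWithinAt_pi.mp hf i).mul (hasDerivWithinAt_pi.mp hg i)

theorem HasDerivWithinAt.mulVec {m : Type*} [Fintype m] (A : Matrix m ι 𝕜)
    (hf : HasDerivWithinAt f f' s x) : HasDerivWithinAt (fun y => A *ᵥ f y) (A *ᵥ f') s x :=
  hasDerivWithinAt_pi.mpr fun i =>
    HasDerivWithinAt.fun_sum fun j _ => (hasDerivWithinAt_pi.mp hf j).const_mul (A i j)

theorem HasDerivWithinAt.dotProduct_mulVec_self {A : Matrix ι ι 𝕜} (hA : A.IsSymm)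
    (hf : HasDerivWithinAt f f' s x) :
    HasDerivWithinAt (fun y => f y ⬝ᵥ (A *ᵥ f y)) (2 * (f x ⬝ᵥ (A *ᵥ f'))) s x := by
  convert hf.dotProduct (hf.mulVec A) using 1
  rw [hA.dotProduct_mulVec_comm f', two_mul]

end Deriv

section Galerkin

variable {n R : Type*} [Fintype n]

theorem galerkin_orthogonality [CommRing R] {C L : Matrix n n R} {V : Submodule R (n → R)}
    {f u u' v v' z : n → R} (hu : C *ᵥ u' + L *ᵥ u = f)
    (hv : ∀ y ∈ V, y ⬝ᵥ (C *ᵥ v' + L *ᵥ v - f) = 0) (hz : z ∈ V) :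
    z ⬝ᵥ (C *ᵥ (u' - v') + L *ᵥ (u - v)) = 0 := by
  have hres : C *ᵥ (u' - v') + L *ᵥ (u - v) = -(C *ᵥ v' + L *ᵥ v - f) := by
    rw [← hu, mulVec_sub, mulVec_sub]
    abel
  rw [hres, dotProduct_neg, hv z hz, neg_zero]

theorem cea_energy_inequality [CommRing R] [LinearOrder R] [IsStrictOrderedRing R] [StarRing R]
    [TrivialStar R] {C L : Matrix n n R} (hC : C.PosSemidef) (hL : L.PosSemidef)
    {u u' v v' w w' : n → R} (horth : (w - v) ⬝ᵥ (C *ᵥ (u' - v') + L *ᵥ (u - v)) = 0) :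
    2 * ((w - v) ⬝ᵥ (C *ᵥ (w' - v'))) + (w - v) ⬝ᵥ (L *ᵥ (w - v)) ≤
      (w' - u') ⬝ᵥ (C *ᵥ (w' - u')) + (w - v) ⬝ᵥ (C *ᵥ (w - v)) +
        (w - u) ⬝ᵥ (L *ᵥ (w - u)) := by
  have hsplitC : (w - v) ⬝ᵥ (C *ᵥ (w' - v')) =
      (w - v) ⬝ᵥ (C *ᵥ (w' - u')) + (w - v) ⬝ᵥ (C *ᵥ (u' - v')) := by
    rw [← dotProduct_add, ← mulVec_add, sub_add_sub_cancel]
  have hsplitL : (w - v) ⬝ᵥ (L *ᵥ (u - v)) =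
      (w - v) ⬝ᵥ (L *ᵥ (w - v)) - (w - v) ⬝ᵥ (L *ᵥ (w - u)) := by
    rw [← dotProduct_sub, ← mulVec_sub, sub_sub_sub_cancel_left]
  rw [dotProduct_add] at horth
  linarith [hC.two_mul_dotProduct_mulVec_le (w - v) (w' - u'),
    hL.two_mul_dotProduct_mulVec_le (w - v) (w - u)]

end Galerkin

theorem galerkin_cea_differential_inequality_general (N : ℕ)
    (C L : Matrix (Fin N) (Fin N) ℝ) (hC : C.PosDef) (hL : L.PosSemidef)
    (V : Submodule ℝ (Fin N → ℝ)) (T : ℝ) (hT : 0 < T)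
    (f u u' ums ums' w w' : ℝ → Fin N → ℝ)
    (hueq : ∀ t ∈ Set.Icc (0 : ℝ) T, C *ᵥ u' t + L *ᵥ u t = f t)
    (humsderiv : ∀ t ∈ Set.Icc (0 : ℝ) T, HasDerivWithinAt ums (ums' t) (Set.Icc 0 T) t)
    (humsmem : ∀ t ∈ Set.Icc (0 : ℝ) T, ums t ∈ V)
    (hgal : ∀ t ∈ Set.Icc (0 : ℝ) T, ∀ v ∈ V,
      v ⬝ᵥ (C *ᵥ ums' t + L *ᵥ ums t - f t) = 0)
    (hwderiv : ∀ t ∈ Set.Icc (0 : ℝ) T, HasDerivWithinAt w (w' t) (Set.Icc 0 T) t)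
    (hwmem : ∀ t ∈ Set.Icc (0 : ℝ) T, w t ∈ V) :
    ∀ t ∈ Set.Icc (0 : ℝ) T, ∀ E' : ℝ,
      HasDerivWithinAt (fun s => (w s - ums s) ⬝ᵥ (C *ᵥ (w s - ums s)))
        E' (Set.Icc 0 T) t →
      E' + (w t - ums t) ⬝ᵥ (L *ᵥ (w t - ums t)) ≤
        (w' t - u' t) ⬝ᵥ (C *ᵥ (w' t - u' t)) +
          (w t - ums t) ⬝ᵥ (C *ᵥ (w t - ums t)) +
            (w t - u t) ⬝ᵥ (L *ᵥ (w t - u t)) := by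
  intro t ht E' hE'
  have hC_symm : C.IsSymm := isHermitian_iff_isSymm.mp hC.isHermitian
  have hE'_eq : E' = 2 * ((w t - ums t) ⬝ᵥ (C *ᵥ (w' t - ums' t))) :=
    (uniqueDiffOn_Icc hT t ht).eq_deriv _ hE'
      (((hwderiv t ht).sub (humsderiv t ht)).dotProduct_mulVec_self hC_symm)
  have horth := galerkin_orthogonality (hueq t ht) (hgal t ht)
    (V.sub_mem (hwmem t ht) (humsmem t ht))
  rw [hE'_eq]
  exact cea_energy_inequality hC.posSemidef hL horth

/-- Céa-type differential inequality. With `e(t) = w(t) − u_ms(t)`, for every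
`t ∈ [0,T]` one has `d/dt ‖e(t)‖_C² + ‖e(t)‖_L² ≤ ‖w'(t) − u'(t)‖_C² + ‖e(t)‖_C² +
‖w(t) − u(t)‖_L²` (stated for any value `E'` of the derivative of `s ↦ ‖e(s)‖_C²` at `t`
within `[0,T]`). -/
theorem galerkin_cea_differential_inequality (N : ℕ) (hN : 1 ≤ N)
    (C L : Matrix (Fin N) (Fin N) ℝ) (hC : C.PosDef) (hL : L.PosSemidef)
    (V : Submodule ℝ (Fin N → ℝ)) (T : ℝ) (hT : 0 < T)
    (f u u' ums ums' w w' : ℝ → Fin N → ℝ)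
    (hf : ContinuousOn f (Set.Icc 0 T))
    (hu' : ContinuousOn u' (Set.Icc 0 T))
    (huderiv : ∀ t ∈ Set.Icc (0 : ℝ) T, HasDerivWithinAt u (u' t) (Set.Icc 0 T) t)
    (hueq : ∀ t ∈ Set.Icc (0 : ℝ) T, C *ᵥ u' t + L *ᵥ u t = f t)
    (hums' : ContinuousOn ums' (Set.Icc 0 T))
    (humsderiv : ∀ t ∈ Set.Icc (0 : ℝ) T, HasDerivWithinAt ums (ums' t) (Set.Icc 0 T) t)
    (humsmem : ∀ t ∈ Set.Icc (0 : ℝ) T, ums t ∈ V)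
    (hgal : ∀ t ∈ Set.Icc (0 : ℝ) T, ∀ v ∈ V,
      v ⬝ᵥ (C *ᵥ ums' t + L *ᵥ ums t - f t) = 0)
    (hw' : ContinuousOn w' (Set.Icc 0 T))
    (hwderiv : ∀ t ∈ Set.Icc (0 : ℝ) T, HasDerivWithinAt w (w' t) (Set.Icc 0 T) t)
    (hwmem : ∀ t ∈ Set.Icc (0 : ℝ) T, w t ∈ V) :
    ∀ t ∈ Set.Icc (0 : ℝ) T, ∀ E' : ℝ,
      HasDerivWithinAt (fun s => (w s - ums s) ⬝ᵥ (C *ᵥ (w s - ums s)))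
        E' (Set.Icc 0 T) t →
      E' + (w t - ums t) ⬝ᵥ (L *ᵥ (w t - ums t)) ≤
        (w' t - u' t) ⬝ᵥ (C *ᵥ (w' t - u' t)) +
          (w t - ums t) ⬝ᵥ (C *ᵥ (w t - ums t)) +
            (w t - u t) ⬝ᵥ (L *ᵥ (w t - u t)) :=
  galerkin_cea_differential_inequality_general N C L hC hL V T hT f u u' ums ums' w w' hueq
    humsderiv humsmem hgal hwderiv hwmem
end

section
/- For each n ≥ 1 there is a constant c_n > 0, depending only on n, such that the following holds for all data: if (uᵏ)_{k=0}^n solves the fine-scale backward Euler scheme, (u_msᵏ)_{k=0}^n ⊆ V solves the Galerkin backward Euler scheme with the same right-hand sides (fᵏ), and (wᵏ)_{k=1}^n is any sequence in V, then ‖uⁿ − u_msⁿ‖_C² + τ Σ_{k=1}^n ‖uᵏ − u_msᵏ‖_L² ≤ c_n ( ‖u⁰ − u_ms⁰‖_C² + Σ_{k=1}^n ( ‖wᵏ − uᵏ‖_C² + τ ‖wᵏ − uᵏ‖_L² ) ). The constant c_n is independent of N, C, L, V, τ, the right-hand sides and the sequences. -/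
/-!
Write `eᵏ = uᵏ − u_msᵏ` and `ηᵏ = wᵏ − uᵏ`. Subtracting the two schemes shows that
`C (eᵏ − eᵏ⁻¹) + τ L eᵏ` is orthogonal to `V`, in particular to `wᵏ − u_msᵏ = eᵏ + ηᵏ`.
Testing with it, the identity `2 eᵀC (e − e') = ‖e‖_C² − ‖e'‖_C² + ‖e − e'‖_C²` and Young's
inequality for the two cross terms give the one-step energy bound
`‖eᵏ‖_C² + τ ‖eᵏ‖_L² ≤ ‖eᵏ⁻¹‖_C² + ‖ηᵏ‖_C² + τ ‖ηᵏ‖_L²`,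
which telescopes; hence `c_n = 1` for every `n`.
-/

open Matrix

namespace Matrix

variable {ι : Type*} [Fintype ι] {M : Matrix ι ι ℝ}

lemma IsHermitian.dotProduct_mulVec_comm (hM : M.IsHermitian) (x y : ι → ℝ) :
    x ⬝ᵥ M *ᵥ y = y ⬝ᵥ M *ᵥ x := by
  rw [dotProduct_mulVec, ← mulVec_transpose, dotProduct_comm,
    ← conjTranspose_eq_transpose_of_trivial, hM.eq]

lemma IsHermitian.two_mul_dotProduct_mulVec_sub (hM : M.IsHermitian) (x y : ι → ℝ) :
    2 * (x ⬝ᵥ M *ᵥ (x - y)) =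
      x ⬝ᵥ M *ᵥ x - y ⬝ᵥ M *ᵥ y + (x - y) ⬝ᵥ M *ᵥ (x - y) := by
  have := hM.dotProduct_mulVec_comm x y
  simp only [mulVec_sub, dotProduct_sub, sub_dotProduct]
  linarith

lemma PosSemidef.dotProduct_mulVec_self_nonneg (hM : M.PosSemidef) (x : ι → ℝ) :
    0 ≤ x ⬝ᵥ M *ᵥ x := by
  simpa using hM.dotProduct_mulVec_nonneg x

lemma PosSemidef.neg_two_mul_dotProduct_mulVec_le (hM : M.PosSemidef) (x y : ι → ℝ) :
    -(2 * (x ⬝ᵥ M *ᵥ y)) ≤ x ⬝ᵥ M *ᵥ x + y ⬝ᵥ M *ᵥ y := by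
  have h := hM.dotProduct_mulVec_self_nonneg (x + y)
  have := hM.isHermitian.dotProduct_mulVec_comm x y
  simp only [mulVec_add, dotProduct_add, add_dotProduct] at h
  linarith

end Matrix

section BackwardEuler

variable {ι : Type*} [Fintype ι] {C L : Matrix ι ι ℝ} {τ : ℝ}

lemma backwardEuler_galerkin_orthogonality (hτ : τ ≠ 0) {u u' ums ums' f v : ι → ℝ}
    (hu : C *ᵥ (τ⁻¹ • (u - u')) + L *ᵥ u = f)
    (hums : v ⬝ᵥ (C *ᵥ (τ⁻¹ • (ums - ums')) + L *ᵥ ums - f) = 0) :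
    v ⬝ᵥ C *ᵥ ((u - ums) - (u' - ums')) + τ * (v ⬝ᵥ L *ᵥ (u - ums)) = 0 := by
  subst hu
  simp only [mulVec_sub, mulVec_smul, dotProduct_sub, dotProduct_add,
    dotProduct_smul, smul_eq_mul] at hums ⊢
  field_simp at hums
  linarith

lemma backwardEuler_energy_step (hC : C.PosSemidef) (hL : L.PosSemidef) (hτ : 0 ≤ τ)
    {e e' η : ι → ℝ}
    (horth : (e + η) ⬝ᵥ C *ᵥ (e - e') + τ * ((e + η) ⬝ᵥ L *ᵥ e) = 0) :
    e ⬝ᵥ C *ᵥ e + τ * (e ⬝ᵥ L *ᵥ e) ≤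
      e' ⬝ᵥ C *ᵥ e' + (η ⬝ᵥ C *ᵥ η + τ * (η ⬝ᵥ L *ᵥ η)) := by
  have hpolar := hC.isHermitian.two_mul_dotProduct_mulVec_sub e e'
  have hyoungC := hC.neg_two_mul_dotProduct_mulVec_le η (e - e')
  have hyoungL := mul_le_mul_of_nonneg_left (hL.neg_two_mul_dotProduct_mulVec_le η e) hτ
  simp only [add_dotProduct] at horth
  linarith

end BackwardEuler

lemma add_sum_Icc_le_of_forall_step {a b d : ℕ → ℝ} {n : ℕ}
    (h : ∀ k ∈ Finset.Icc 1 n, a k + b k ≤ a (k - 1) + d k) :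
    a n + ∑ k ∈ Finset.Icc 1 n, b k ≤ a 0 + ∑ k ∈ Finset.Icc 1 n, d k := by
  induction n with
  | zero => simp
  | succ n ih =>
    rw [Finset.sum_Icc_succ_top (by omega), Finset.sum_Icc_succ_top (by omega)]
    have hprev := ih fun k hk => h k (Finset.Icc_subset_Icc_right n.le_succ hk)
    have hlast := h (n + 1) (by simp)
    rw [Nat.add_sub_cancel] at hlast
    linarith

/-- For each `n ≥ 1` there is a constant `c_n > 0`, depending only on `n`,
such that for all data (dimension `N`, matrices `C`, `L`, subspace `V`, step `τ`,
right-hand sides `fᵏ`, fine-scale solution `uᵏ`, Galerkin solution `u_msᵏ ∈ V` and any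
comparison sequence `wᵏ ∈ V`):
`‖uⁿ − u_msⁿ‖_C² + τ Σ_{k=1}^n ‖uᵏ − u_msᵏ‖_L² ≤
c_n (‖u⁰ − u_ms⁰‖_C² + Σ_{k=1}^n (‖wᵏ − uᵏ‖_C² + τ ‖wᵏ − uᵏ‖_L²))`. -/
theorem galerkin_backward_euler_error_estimate :
    ∀ n : ℕ, 1 ≤ n → ∃ c : ℝ, 0 < c ∧
      ∀ (N : ℕ), 1 ≤ N →
      ∀ (C L : Matrix (Fin N) (Fin N) ℝ), C.PosDef → L.PosSemidef →
      ∀ (V : Submodule ℝ (Fin N → ℝ)) (τ : ℝ), 0 < τ →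
      ∀ (u ums f w : ℕ → Fin N → ℝ),
        (∀ k : ℕ, 1 ≤ k → k ≤ n →
          C *ᵥ (τ⁻¹ • (u k - u (k - 1))) + L *ᵥ u k = f k) →
        (∀ k : ℕ, k ≤ n → ums k ∈ V) →
        (∀ k : ℕ, 1 ≤ k → k ≤ n → ∀ v ∈ V,
          v ⬝ᵥ (C *ᵥ (τ⁻¹ • (ums k - ums (k - 1))) + L *ᵥ ums k - f k) = 0) →
        (∀ k : ℕ, 1 ≤ k → k ≤ n → w k ∈ V) →
        (u n - ums n) ⬝ᵥ (C *ᵥ (u n - ums n)) +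
            τ * ∑ k ∈ Finset.Icc 1 n, (u k - ums k) ⬝ᵥ (L *ᵥ (u k - ums k)) ≤
          c * ((u 0 - ums 0) ⬝ᵥ (C *ᵥ (u 0 - ums 0)) +
            ∑ k ∈ Finset.Icc 1 n,
              ((w k - u k) ⬝ᵥ (C *ᵥ (w k - u k)) +
                τ * ((w k - u k) ⬝ᵥ (L *ᵥ (w k - u k))))) := by
  intro n _
  refine ⟨1, one_pos, ?_⟩
  intro N _ C L hC hL V τ hτ u ums f w hu hums_mem hums hw
  rw [one_mul, Finset.mul_sum]
  refine add_sum_Icc_le_of_forall_step (a := fun k => (u k - ums k) ⬝ᵥ C *ᵥ (u k - ums k))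
    fun k hk => ?_
  obtain ⟨hk1, hkn⟩ := Finset.mem_Icc.mp hk
  have horth := backwardEuler_galerkin_orthogonality hτ.ne' (hu k hk1 hkn)
    (hums k hk1 hkn _ (V.sub_mem (hw k hk1 hkn) (hums_mem k hkn)))
  rw [show w k - ums k = (u k - ums k) + (w k - u k) by abel] at horth
  exact backwardEuler_energy_step hC.posSemidef hL hτ.le horth
end
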